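/- Invariant measures of CM3: every finitely additive probability measure μ on the Borel σ-algebra of [0,1] that is invariant for CM3 (Aμ = μ) satisfies μ((0,1)) = 0; consequently the set of invariant finitely additive probability measures of CM3 is exactly the set of convex combinations t·δ₀ + (1−t)·δ₁, t ∈ [0,1], and in particular all invariant finitely additive measures of CM3 are countably additive. -/

import Mathlib

open MeasureTheory Set Filter Topology Function

/-- A bounded finitely additive set function on the σ-algebra. -/
def IsFinAdd {X : Type*} [MeasurableSpace X] (μ : Set X → ℝ) : Prop :=
  μ ∅ = 0 ∧ ∀ E F : Set X, MeasurableSet E → MeasurableSet F → Disjoint E F →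
    μ (E ∪ F) = μ E + μ F

/-- Nonnegativity on measurable sets. -/
def IsNonnegSF {X : Type*} [MeasurableSpace X] (μ : Set X → ℝ) : Prop :=
  ∀ E : Set X, MeasurableSet E → 0 ≤ μ E

/-- Countable additivity on the σ-algebra. -/
def IsCtblAdd {X : Type*} [MeasurableSpace X] (μ : Set X → ℝ) : Prop :=
  ∀ E : ℕ → Set X, (∀ n, MeasurableSet (E n)) → Pairwise (Disjoint on E) →
    HasSum (fun n => μ (E n)) (μ (⋃ n, E n))

/-- A nonnegative finitely additive measure is purely finitely additive if the only
countably additive measure `lam` with `0 ≤ lam ≤ μ` is `lam = 0`. -/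
def IsPurelyFinAdd {X : Type*} [MeasurableSpace X] (μ : Set X → ℝ) : Prop :=
  ∀ lam : Set X → ℝ, IsFinAdd lam → IsCtblAdd lam →
    (∀ E, MeasurableSet E → 0 ≤ lam E) → (∀ E, MeasurableSet E → lam E ≤ μ E) →
    ∀ E, MeasurableSet E → lam E = 0

/-- The integral of a bounded measurable function with respect to a (finitely additive)
set function, defined by the layer-cake formula. -/
noncomputable def faIntegral {X : Type*} [MeasurableSpace X] (μ : Set X → ℝ) (f : X → ℝ) : ℝ :=
  (∫ t in Set.Ioi (0:ℝ), μ {x | t < f x}) - (∫ t in Set.Ioi (0:ℝ), μ {x | f x < -t})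

/-- The Dirac measure at `y`, as a set function. -/
noncomputable def diracSF (y : ℝ) (E : Set ℝ) : ℝ := E.indicator (fun _ => (1:ℝ)) y

/-- The transition function of CM1: `p(x,·) = x·δ_{x²} + (1-x)·δ₀` on `(0,1)`,
`p(0,·) = δ₀`, `p(1,·) = δ₁` (the formula below specializes correctly at `0` and `1`). -/
noncomputable def p1 (x : ℝ) (E : Set ℝ) : ℝ :=
  x * diracSF (x ^ 2) E + (1 - x) * diracSF 0 E

/-- The transition function of CM2: `p(x,·) = (1-x)·δ_{x²} + x·δ₀` on `(0,1)`,
`p(0,·) = δ₀`, `p(1,·) = δ₁`. -/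
noncomputable def p2 (x : ℝ) (E : Set ℝ) : ℝ :=
  if x = 1 then diracSF 1 E else (1 - x) * diracSF (x ^ 2) E + x * diracSF 0 E

/-- The transition function of CM3: the CM1 rule on `[0,1/2]`, the CM2 rule on `(1/2,1)`,
`p(1,·) = δ₁`. -/
noncomputable def p3 (x : ℝ) (E : Set ℝ) : ℝ :=
  if x = 1 then diracSF 1 E
  else if x ≤ 1 / 2 then x * diracSF (x ^ 2) E + (1 - x) * diracSF 0 E
  else (1 - x) * diracSF (x ^ 2) E + x * diracSF 0 E

/-- The `n`-step transition function of CM1 (`p1n 0` is the identity kernel, and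
`p1n (n+1) x E = ∫ p1n n (y,E) p(x,dy)` is the integral convolution). -/
noncomputable def p1n : ℕ → ℝ → Set ℝ → ℝ
  | 0 => fun x E => diracSF x E
  | n + 1 => fun x E => faIntegral (p1 x) fun y => p1n n y E

/-- The `n`-step transition function of CM2. -/
noncomputable def p2n : ℕ → ℝ → Set ℝ → ℝ
  | 0 => fun x E => diracSF x E
  | n + 1 => fun x E => faIntegral (p2 x) fun y => p2n n y E

/-- The `n`-step transition function of CM3. -/
noncomputable def p3n : ℕ → ℝ → Set ℝ → ℝ
  | 0 => fun x E => diracSF x E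
  | n + 1 => fun x E => faIntegral (p3 x) fun y => p3n n y E

/-!
On `(0,1)` the probability `p(x,(0,1))` of staying in `(0,1)` is `min(x, 1-x) ≤ 1/2`, and off
`(0,1)` it is `≤ 0`. Hence an invariant `μ` satisfies `μ(0,1) = ∫ p(x,(0,1)) μ(dx) ≤ μ(0,1)/2`,
so `μ(0,1) = 0`. A finitely additive probability on `[0,1]` that vanishes on `(0,1)` lives on the
atoms `0` and `1`, i.e. it is `t δ₀ + (1-t) δ₁`; conversely `0` and `1` are absorbing, so every such
combination is invariant.
-/

namespace IsFinAdd

variable {X : Type*} [MeasurableSpace X] {μ : Set X → ℝ}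

theorem inter_add_diff (hfa : IsFinAdd μ) {E S : Set X} (hE : MeasurableSet E)
    (hS : MeasurableSet S) : μ E = μ (E ∩ S) + μ (E \ S) := by
  rw [← hfa.2 _ _ (hE.inter hS) (hE.diff hS) (disjoint_sdiff_inter.symm),
    inter_union_sdiff]

theorem mono (hfa : IsFinAdd μ) (hnn : IsNonnegSF μ) {A B : Set X} (hA : MeasurableSet A)
    (hB : MeasurableSet B) (hAB : A ⊆ B) : μ A ≤ μ B := by
  rw [hfa.inter_add_diff hB hA, inter_eq_self_of_subset_right hAB]
  linarith [hnn _ (hB.diff hA)]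

theorem eq_zero_of_subset (hfa : IsFinAdd μ) (hnn : IsNonnegSF μ) {A B : Set X}
    (hA : MeasurableSet A) (hB : MeasurableSet B) (hAB : A ⊆ B) (hB0 : μ B = 0) : μ A = 0 :=
  le_antisymm (hB0 ▸ hfa.mono hnn hA hB hAB) (hnn A hA)

theorem union_eq_zero (hfa : IsFinAdd μ) (hnn : IsNonnegSF μ) {A B : Set X}
    (hA : MeasurableSet A) (hB : MeasurableSet B) (hA0 : μ A = 0) (hB0 : μ B = 0) :
    μ (A ∪ B) = 0 := by
  rw [← union_sdiff_self, hfa.2 _ _ hA (hB.diff hA) disjoint_sdiff_right, hA0,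
    hfa.eq_zero_of_subset hnn (hB.diff hA) hB sdiff_subset hB0, add_zero]

theorem compl_eq_zero (hfa : IsFinAdd μ) {A : Set X} (hA : MeasurableSet A)
    (h : μ A = μ univ) : μ Aᶜ = 0 := by
  have := hfa.2 _ _ hA hA.compl disjoint_compl_right
  rw [union_compl_self] at this
  linarith

end IsFinAdd

theorem IsCtblAdd.congr {X : Type*} [MeasurableSpace X] {μ ν : Set X → ℝ} (hν : IsCtblAdd ν)
    (h : ∀ E, MeasurableSet E → μ E = ν E) : IsCtblAdd μ := by
  intro E hE hd
  simpa only [h _ (hE _), h _ (MeasurableSet.iUnion hE)] using hν E hE hd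

theorem integrableOn_Ioi_indicator_Iio (a m : ℝ) :
    IntegrableOn ((Iio a).indicator fun _ => m) (Ioi 0) := by
  rw [IntegrableOn, integrable_indicator_iff measurableSet_Iio]
  exact integrableOn_const
    (by simp [Measure.restrict_apply measurableSet_Iio, Iio_inter_Ioi, Real.volume_Ioo])

theorem setIntegral_Ioi_indicator_Iio (a m : ℝ) :
    ∫ t in Ioi 0, (Iio a).indicator (fun _ => m) t = max a 0 * m := by
  rw [integral_indicator measurableSet_Iio, Measure.restrict_restrict measurableSet_Iio,
    Iio_inter_Ioi, setIntegral_const, Real.volume_real_Ioo, sub_zero, smul_eq_mul]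

theorem faIntegral_le_of_le_indicator {X : Type*} [MeasurableSpace X] {μ : Set X → ℝ}
    (hfa : IsFinAdd μ) (hnn : IsNonnegSF μ) {f : X → ℝ} (hf : Measurable f) {A : Set X}
    (hA : MeasurableSet A) {c : ℝ} (hc : 0 ≤ c) (hle : ∀ x, f x ≤ A.indicator (fun _ => c) x) :
    faIntegral μ f ≤ c * μ A := by
  have hneg : 0 ≤ ∫ t in Ioi (0:ℝ), μ {x | f x < -t} :=
    setIntegral_nonneg measurableSet_Ioi fun t _ => hnn _ (measurableSet_lt hf measurable_const)
  have hlayer : ∀ t ∈ Ioi (0:ℝ), μ {x | t < f x} ≤ (Iio c).indicator (fun _ => μ A) t := by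
    intro t (ht : 0 < t)
    have hmeas : MeasurableSet {x | t < f x} := measurableSet_lt measurable_const hf
    by_cases htc : t < c
    · rw [indicator_of_mem (show t ∈ Iio c from htc)]
      refine hfa.mono hnn hmeas hA fun x (hx : t < f x) => ?_
      by_contra hxA
      linarith [hle x, indicator_of_notMem hxA (fun _ => c)]
    · have hempty : {x | t < f x} = ∅ := eq_empty_of_forall_notMem fun x (hx : t < f x) => by
        linarith [hle x, indicator_le_self' (s := A) (fun _ _ => hc) x, not_lt.mp htc]
      rw [indicator_of_notMem (show t ∉ Iio c from htc), hempty, hfa.1]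
  have hpos : ∫ t in Ioi (0:ℝ), μ {x | t < f x} ≤ c * μ A := by
    by_cases hint : IntegrableOn (fun t => μ {x | t < f x}) (Ioi 0)
    · calc _ ≤ ∫ t in Ioi (0:ℝ), (Iio c).indicator (fun _ => μ A) t :=
            setIntegral_mono_on hint (integrableOn_Ioi_indicator_Iio c _) measurableSet_Ioi hlayer
        _ = c * μ A := by rw [setIntegral_Ioi_indicator_Iio, max_eq_left hc]
    · rw [integral_undef hint]
      exact mul_nonneg hc (hnn A hA)
  unfold faIntegral
  linarith

theorem diracSF_setOf_lt (y t : ℝ) (g : ℝ → ℝ) :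
    diracSF y {x | t < g x} = (Iio (g y)).indicator (fun _ => 1) t := by
  simp only [diracSF, indicator_apply, mem_ofPred_eq, mem_Iio]

theorem faIntegral_diracSF_add (a b y z : ℝ) (f : ℝ → ℝ) :
    faIntegral (fun F => a * diracSF y F + b * diracSF z F) f = a * f y + b * f z := by
  have hlayer : ∀ g : ℝ → ℝ, ∫ t in Ioi (0:ℝ), (a * diracSF y {x | t < g x} +
      b * diracSF z {x | t < g x}) = a * max (g y) 0 + b * max (g z) 0 := by
    intro g
    simp only [diracSF_setOf_lt]
    rw [integral_add ((integrableOn_Ioi_indicator_Iio _ _).const_mul a)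
      ((integrableOn_Ioi_indicator_Iio _ _).const_mul b), integral_const_mul, integral_const_mul,
      setIntegral_Ioi_indicator_Iio, setIntegral_Ioi_indicator_Iio, mul_one, mul_one]
  have hneg : ∀ t : ℝ, {x | f x < -t} = {x | t < -f x} := fun t =>
    ext fun x => show f x < -t ↔ t < -f x from lt_neg
  unfold faIntegral
  simp only [hneg]
  rw [hlayer f, hlayer fun x => -f x]
  linear_combination a * max_zero_sub_max_neg_zero_eq_self (f y) +
    b * max_zero_sub_max_neg_zero_eq_self (f z)

theorem diracSF_union (y : ℝ) {E F : Set ℝ} (hEF : Disjoint E F) :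
    diracSF y (E ∪ F) = diracSF y E + diracSF y F :=
  congr_fun (indicator_union_of_disjoint hEF _) y

theorem hasSum_diracSF_iUnion (y : ℝ) {E : ℕ → Set ℝ} (hd : Pairwise (Disjoint on E)) :
    HasSum (fun n => diracSF y (E n)) (diracSF y (⋃ n, E n)) := by
  by_cases hy : y ∈ ⋃ n, E n
  · obtain ⟨m, hm⟩ := mem_iUnion.mp hy
    have hunion : diracSF y (⋃ n, E n) = diracSF y (E m) := by simp [diracSF, hy, hm]
    rw [hunion]
    exact hasSum_single m fun n hn =>
      indicator_of_notMem (fun h => disjoint_left.mp (hd hn) h hm) _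
  · have hE : ∀ n, y ∉ E n := fun n h => hy (mem_iUnion.mpr ⟨n, h⟩)
    simp [diracSF, hy, hE]

section DiracCombination

variable (a b y z : ℝ)

theorem isFinAdd_diracSF_add : IsFinAdd fun F => a * diracSF y F + b * diracSF z F := by
  refine ⟨by simp [diracSF], fun E F _ _ hEF => ?_⟩
  simp only [diracSF_union _ hEF]
  ring

theorem isNonnegSF_diracSF_add {a b : ℝ} (ha : 0 ≤ a) (hb : 0 ≤ b) :
    IsNonnegSF fun F => a * diracSF y F + b * diracSF z F := fun E _ => by
  have hδ : ∀ w, 0 ≤ diracSF w E := fun w => indicator_nonneg (fun _ _ => zero_le_one) w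
  exact add_nonneg (mul_nonneg ha (hδ y)) (mul_nonneg hb (hδ z))

theorem isCtblAdd_diracSF_add : IsCtblAdd fun F => a * diracSF y F + b * diracSF z F :=
  fun _ _ hd => ((hasSum_diracSF_iUnion y hd).mul_left a).add
    ((hasSum_diracSF_iUnion z hd).mul_left b)

end DiracCombination

namespace IsFinAdd

variable {μ : Set ℝ → ℝ}

theorem inter_singleton (hfa : IsFinAdd μ) (y : ℝ) (E : Set ℝ) :
    μ (E ∩ {y}) = μ {y} * diracSF y E := by
  by_cases hy : y ∈ E
  · simp [diracSF, hy, inter_eq_self_of_subset_right (singleton_subset_iff.mpr hy)]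
  · simp [diracSF, hy, inter_singleton_eq_empty.mpr hy, hfa.1]

theorem eq_diracSF_add (hfa : IsFinAdd μ) (hnn : IsNonnegSF μ) {y z : ℝ} (hyz : y ≠ z)
    (hnull : μ {y, z}ᶜ = 0) {E : Set ℝ} (hE : MeasurableSet E) :
    μ E = μ {y} * diracSF y E + μ {z} * diracSF z E := by
  have hEy : MeasurableSet (E \ {y}) := hE.diff (measurableSet_singleton y)
  have hcomm : (E \ {y}) ∩ {z} = E ∩ {z} := by
    ext x
    simp only [mem_inter_iff, Set.mem_sdiff, mem_singleton_iff]
    constructor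
    · rintro ⟨⟨hx, _⟩, rfl⟩; exact ⟨hx, rfl⟩
    · rintro ⟨hx, rfl⟩; exact ⟨⟨hx, hyz.symm⟩, rfl⟩
  have hrest : μ ((E \ {y}) \ {z}) = 0 := by
    refine hfa.eq_zero_of_subset hnn (hEy.diff (measurableSet_singleton z))
      ((measurableSet_singleton z).insert y).compl ?_ hnull
    intro x hx
    simp_all
  rw [hfa.inter_add_diff hE (measurableSet_singleton y),
    hfa.inter_add_diff hEy (measurableSet_singleton z), hcomm, hrest, add_zero,
    hfa.inter_singleton, hfa.inter_singleton]

end IsFinAdd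

theorem measurable_p3 {E : Set ℝ} (hE : MeasurableSet E) : Measurable fun x => p3 x E := by
  have hδ : Measurable fun x : ℝ => diracSF (x ^ 2) E :=
    (measurable_const.indicator hE).comp (measurable_id.pow_const 2)
  unfold p3
  refine Measurable.ite (measurableSet_singleton 1) measurable_const
    (Measurable.ite measurableSet_Iic ?_ ?_) <;> fun_prop

theorem p3_zero (E : Set ℝ) : p3 0 E = diracSF 0 E := by norm_num [p3]

theorem p3_one (E : Set ℝ) : p3 1 E = diracSF 1 E := by norm_num [p3]

theorem p3_Ioo_le_indicator (x : ℝ) :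
    p3 x (Ioo 0 1) ≤ (Ioo 0 1).indicator (fun _ => 1 / 2) x := by
  simp only [p3, diracSF, indicator_apply, mem_Ioo]
  rcases le_or_gt x 0 with hx | hx <;> rcases lt_or_ge x 1 with hx' | hx' <;>
    split_ifs <;> first | nlinarith | tauto

theorem IsFinAdd.measure_Ioo_eq_zero_of_p3_invariant {μ : Set ℝ → ℝ} (hfa : IsFinAdd μ)
    (hnn : IsNonnegSF μ) (hinv : faIntegral μ (fun x => p3 x (Ioo 0 1)) = μ (Ioo 0 1)) :
    μ (Ioo 0 1) = 0 := by
  have := faIntegral_le_of_le_indicator hfa hnn (measurable_p3 measurableSet_Ioo)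
    measurableSet_Ioo (by norm_num) p3_Ioo_le_indicator
  linarith [hnn (Ioo 0 1) measurableSet_Ioo]

/-- Invariant measures of CM3: every invariant finitely additive probability measure `μ`
satisfies `μ((0,1)) = 0` and is a convex combination `t·δ₀ + (1-t)·δ₁` (in particular it
is countably additive); conversely every such convex combination is an invariant finitely
additive probability measure. -/
theorem cm3_invariant_measures :
    (∀ μ : Set ℝ → ℝ, IsFinAdd μ → IsNonnegSF μ → μ Set.univ = 1 → μ (Set.Icc 0 1) = 1 →
      (∀ E : Set ℝ, MeasurableSet E → faIntegral μ (fun x => p3 x E) = μ E) →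
      μ (Set.Ioo 0 1) = 0 ∧
      (∃ t ∈ Set.Icc (0:ℝ) 1, ∀ E : Set ℝ, MeasurableSet E →
        μ E = t * diracSF 0 E + (1 - t) * diracSF 1 E) ∧
      IsCtblAdd μ) ∧
    (∀ t ∈ Set.Icc (0:ℝ) 1,
      IsFinAdd (fun E : Set ℝ => t * diracSF 0 E + (1 - t) * diracSF 1 E) ∧
      IsNonnegSF (fun E : Set ℝ => t * diracSF 0 E + (1 - t) * diracSF 1 E) ∧
      t * diracSF 0 Set.univ + (1 - t) * diracSF 1 Set.univ = 1 ∧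
      t * diracSF 0 (Set.Icc 0 1) + (1 - t) * diracSF 1 (Set.Icc 0 1) = 1 ∧
      ∀ E : Set ℝ, MeasurableSet E →
        faIntegral (fun F : Set ℝ => t * diracSF 0 F + (1 - t) * diracSF 1 F)
            (fun x => p3 x E) =
          t * diracSF 0 E + (1 - t) * diracSF 1 E) := by
  refine ⟨fun μ hfa hnn huniv hIcc hinv => ?_, fun t ⟨ht0, ht1⟩ => ?_⟩
  · have hIoo := hfa.measure_Ioo_eq_zero_of_p3_invariant hnn (hinv _ measurableSet_Ioo)
    have hout : μ (Icc 0 1)ᶜ = 0 := hfa.compl_eq_zero measurableSet_Icc (hIcc.trans huniv.symm)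
    have hsub : ({0, 1} : Set ℝ)ᶜ ⊆ Ioo 0 1 ∪ (Icc 0 1)ᶜ := fun x hx => by
      by_cases h : x ∈ Icc 0 1
      · exact Or.inl (by rw [← Icc_sdiff_both]; exact ⟨h, hx⟩)
      · exact Or.inr h
    have hnull : μ {0, 1}ᶜ = 0 :=
      hfa.eq_zero_of_subset hnn ((measurableSet_singleton 1).insert 0).compl
        (measurableSet_Ioo.union measurableSet_Icc.compl) hsub
        (hfa.union_eq_zero hnn measurableSet_Ioo measurableSet_Icc.compl hIoo hout)
    have hrep := fun E (hE : MeasurableSet E) => hfa.eq_diracSF_add hnn zero_ne_one hnull hE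
    have h1 : μ {1} = 1 - μ {0} := by
      have := hrep (Icc 0 1) measurableSet_Icc
      simp only [hIcc, diracSF, mem_Icc, le_refl, zero_le_one, and_self, indicator_of_mem,
        mul_one] at this
      linarith
    rw [h1] at hrep
    refine ⟨hIoo, ⟨μ {0}, ⟨hnn _ (measurableSet_singleton 0), ?_⟩, hrep⟩,
      (isCtblAdd_diracSF_add _ _ 0 1).congr hrep⟩
    linarith [hnn _ (measurableSet_singleton 1)]
  · refine ⟨isFinAdd_diracSF_add _ _ 0 1, isNonnegSF_diracSF_add 0 1 ht0 (by linarith),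
      by simp [diracSF], by simp [diracSF], fun E _ => ?_⟩
    rw [faIntegral_diracSF_add, p3_zero, p3_one]
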